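/- Consider a Galton–Watson branching process where each individual has a Binomial(m, p) number of offspring with mean mp ≥ 1. Then for every k > 0, the probability that the process survives to generation k is at least 1/(k+1). -/

import Mathlib

open MeasureTheory ProbabilityTheory
open scoped ENNReal NNReal

/-!
The generating function `s ↦ 𝔼[s ^ Z n]` of generation `n` is the `n`-fold iterate of the
offspring generating function `f`: on the event `Z n = z`, `s ^ Z (n + 1)` is the product of the
`z` independent factors `s ^ ξ (n, j)`, which are independent of the earlier generations. Hence
the probability of extinction by generation `k` is `f^[k] 0`. For Binomial(m, p) offspring with
`m p ≥ 1`, Bernoulli's inequality gives `f s = (1 - p (1 - s)) ^ m ≤ 1 / (1 + m p (1 - s)) ≤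
1 / (2 - s)` on `[0, 1]`, and `s ↦ 1 / (2 - s)` maps `n / (n + 1)` to `(n + 1) / (n + 2)`, so
`f^[k] 0 ≤ k / (k + 1)`.
-/

lemma pow_one_sub_le_one_div_one_add_mul {a : ℝ} (ha0 : 0 ≤ a) (ha1 : a ≤ 1) (m : ℕ) :
    (1 - a) ^ m ≤ 1 / (1 + m * a) := by
  rw [le_div_iff₀ (by positivity)]
  calc (1 - a) ^ m * (1 + m * a) ≤ (1 - a) ^ m * (1 + a) ^ m :=
        mul_le_mul_of_nonneg_left (one_add_mul_le_pow (by linarith) m) (pow_nonneg (by linarith) m)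
    _ = (1 - a ^ 2) ^ m := by rw [← mul_pow]; ring
    _ ≤ 1 := pow_le_one₀ (by nlinarith) (by nlinarith)

lemma lintegral_eq_tsum_setLIntegral_fiber {Ω : Type*} [MeasurableSpace Ω] {μ : Measure Ω}
    {N : Ω → ℕ} (hN : Measurable N) (f : Ω → ℝ≥0∞) :
    ∫⁻ ω, f ω ∂μ = ∑' z, ∫⁻ ω in N ⁻¹' {z}, f ω ∂μ := by
  rw [← lintegral_iUnion (fun z => hN (measurableSet_singleton z))
    (fun _ _ h => Disjoint.preimage N (Set.disjoint_singleton.2 h)), ← Set.preimage_iUnion,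
    Set.iUnion_of_singleton, Set.preimage_univ, Measure.restrict_univ]

lemma setLIntegral_eq_measure_mul_lintegral_of_indep {Ω : Type*} {M₁ M₂ mΩ : MeasurableSpace Ω}
    {μ : Measure Ω} (h₁ : M₁ ≤ mΩ) (h₂ : M₂ ≤ mΩ) (hindep : Indep M₁ M₂ μ) {A : Set Ω}
    (hA : MeasurableSet[M₁] A) {f : Ω → ℝ≥0∞} (hf : Measurable[M₂] f) :
    ∫⁻ ω in A, f ω ∂μ = μ A * ∫⁻ ω, f ω ∂μ := by
  have hind : Measurable[M₁] (A.indicator 1 : Ω → ℝ≥0∞) := measurable_const.indicator hA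
  rw [← lintegral_indicator (h₁ _ hA), ← lintegral_indicator_one (h₁ _ hA),
    ← lintegral_mul_eq_lintegral_mul_lintegral_of_independent_measurableSpace h₁ h₂ hindep hind hf]
  congr with ω
  by_cases hω : ω ∈ A <;> simp [hω]

namespace GaltonWatson

variable {Ω : Type*} {ξ : ℕ × ℕ → Ω → ℕ}

/-- `ξ (n, j)` is the number of children of the `j`-th individual of generation `n`. -/
def population (ξ : ℕ × ℕ → Ω → ℕ) : ℕ → Ω → ℕ
  | 0 => fun _ => 1
  | n + 1 => fun ω => ∑ j ∈ Finset.range (population ξ n ω), ξ (n, j) ω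

lemma eq_population {Z : ℕ → Ω → ℕ} (hZ0 : ∀ ω, Z 0 ω = 1)
    (hZrec : ∀ n ω, Z (n + 1) ω = ∑ j ∈ Finset.range (Z n ω), ξ (n, j) ω) :
    Z = population ξ := by
  funext n ω
  induction n with
  | zero => exact hZ0 ω
  | succ n ih => rw [hZrec, ih]; rfl

abbrev offspringBefore (ξ : ℕ × ℕ → Ω → ℕ) (n : ℕ) : MeasurableSpace Ω :=
  ⨆ r ∈ {r : ℕ × ℕ | r.1 < n}, MeasurableSpace.comap (ξ r) inferInstance

lemma measurable_population_offspringBefore (n : ℕ) :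
    Measurable[offspringBefore ξ n] (population ξ n) := by
  induction n with
  | zero => exact measurable_const
  | succ n ih =>
    have hmono : offspringBefore ξ n ≤ offspringBefore ξ (n + 1) :=
      biSup_mono fun r hr => Nat.lt_succ_of_lt hr
    have hξ : ∀ j, Measurable[offspringBefore ξ (n + 1)] (ξ (n, j)) := fun j =>
      Measurable.of_comap_le (le_biSup (fun r => MeasurableSpace.comap (ξ r) inferInstance)
        (Nat.lt_succ_self n : (n, j).1 < n + 1))
    -- the product σ-algebra on `Ω × ℕ` below is built from this local instance
    let _ := offspringBefore ξ (n + 1)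
    have hsum : Measurable (fun p : Ω × ℕ => ∑ j ∈ Finset.range p.2, ξ (n, j) p.1) :=
      measurable_from_prod_countable_left fun z =>
        Finset.measurable_sum (Finset.range z) fun j _ => hξ j
    exact hsum.comp (measurable_id.prodMk (ih.mono hmono le_rfl))

abbrev offspringAt (ξ : ℕ × ℕ → Ω → ℕ) (n : ℕ) : MeasurableSpace Ω :=
  ⨆ r ∈ {r : ℕ × ℕ | r.1 = n}, MeasurableSpace.comap (ξ r) inferInstance

lemma measurable_offspringAt (n j : ℕ) : Measurable[offspringAt ξ n] (ξ (n, j)) :=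
  Measurable.of_comap_le (le_biSup (fun r => MeasurableSpace.comap (ξ r) inferInstance)
    (rfl : (n, j).1 = n))

variable [MeasurableSpace Ω] {μ : Measure Ω}

lemma offspringBefore_le (hξ : ∀ r, Measurable (ξ r)) (n : ℕ) :
    offspringBefore ξ n ≤ ‹MeasurableSpace Ω› :=
  iSup₂_le fun r _ => (hξ r).comap_le

lemma offspringAt_le (hξ : ∀ r, Measurable (ξ r)) (n : ℕ) :
    offspringAt ξ n ≤ ‹MeasurableSpace Ω› :=
  iSup₂_le fun r _ => (hξ r).comap_le

lemma measurable_population (hξ : ∀ r, Measurable (ξ r)) (n : ℕ) :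
    Measurable (population ξ n) :=
  (measurable_population_offspringBefore n).mono (offspringBefore_le hξ n) le_rfl

lemma indep_offspringBefore_offspringAt (hξ : ∀ r, Measurable (ξ r)) (hind : iIndepFun ξ μ)
    (n : ℕ) : Indep (offspringBefore ξ n) (offspringAt ξ n) μ :=
  indep_iSup_of_disjoint (fun r => (hξ r).comap_le) hind
    (Set.disjoint_left.2 fun r (h₁ : r.1 < n) (h₂ : r.1 = n) => h₁.ne h₂)

lemma population_congr_ae {ξ' : ℕ × ℕ → Ω → ℕ} (h : ∀ r, ξ r =ᵐ[μ] ξ' r) (n : ℕ) :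
    population ξ n =ᵐ[μ] population ξ' n := by
  filter_upwards [ae_all_iff.2 h] with ω hω
  induction n with
  | zero => rfl
  | succ n ih => simp only [population, ih, hω]

lemma lintegral_pow_population_succ (hξ : ∀ r, Measurable (ξ r)) (hind : iIndepFun ξ μ)
    {φ : ℝ≥0∞ → ℝ≥0∞} (hφ : ∀ r s, ∫⁻ ω, s ^ ξ r ω ∂μ = φ s) (n : ℕ) (s : ℝ≥0∞) :
    ∫⁻ ω, s ^ population ξ (n + 1) ω ∂μ = ∫⁻ ω, φ s ^ population ξ n ω ∂μ := by
  have hZ := measurable_population hξ n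
  have hprod : ∀ z, ∫⁻ ω, ∏ j ∈ Finset.range z, s ^ ξ (n, j) ω ∂μ = φ s ^ z := fun z => by
    have hX : iIndepFun (fun j ω => s ^ ξ (n, j) ω) μ :=
      (hind.precomp (Prod.mk_right_injective n)).comp (fun _ k => s ^ k)
        fun _ => measurable_from_top
    rw [lintegral_prod_eq_prod_lintegral_of_indepFun _ _ hX
      fun j => measurable_from_top.comp (hξ (n, j))]
    simp [hφ]
  rw [lintegral_eq_tsum_setLIntegral_fiber hZ, lintegral_eq_tsum_setLIntegral_fiber hZ]
  congr with z
  have hfiber : MeasurableSet[offspringBefore ξ n] (population ξ n ⁻¹' {z}) :=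
    measurable_population_offspringBefore n (measurableSet_singleton z)
  calc ∫⁻ ω in population ξ n ⁻¹' {z}, s ^ population ξ (n + 1) ω ∂μ
      = ∫⁻ ω in population ξ n ⁻¹' {z}, ∏ j ∈ Finset.range z, s ^ ξ (n, j) ω ∂μ :=
        setLIntegral_congr_fun (hZ (measurableSet_singleton z)) fun ω (hω : _ = z) => by
          rw [population, ← hω, Finset.prod_pow_eq_pow_sum]
    _ = μ (population ξ n ⁻¹' {z}) * φ s ^ z := by
        rw [setLIntegral_eq_measure_mul_lintegral_of_indep (offspringBefore_le hξ n)
          (offspringAt_le hξ n) (indep_offspringBefore_offspringAt hξ hind n) hfiber, hprod]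
        exact Finset.measurable_prod _ fun j _ => measurable_from_top.comp
          (measurable_offspringAt n j)
    _ = ∫⁻ ω in population ξ n ⁻¹' {z}, φ s ^ population ξ n ω ∂μ := by
        rw [setLIntegral_congr_fun (hZ (measurableSet_singleton z)) fun ω (hω : _ = z) => by
          rw [hω], setLIntegral_const, mul_comm]

lemma lintegral_pow_population [IsProbabilityMeasure μ] (hξ : ∀ r, Measurable (ξ r))
    (hind : iIndepFun ξ μ) {φ : ℝ≥0∞ → ℝ≥0∞} (hφ : ∀ r s, ∫⁻ ω, s ^ ξ r ω ∂μ = φ s) (n : ℕ)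
    (s : ℝ≥0∞) : ∫⁻ ω, s ^ population ξ n ω ∂μ = φ^[n] s := by
  induction n generalizing s with
  | zero => simp [population]
  | succ n ih =>
    rw [lintegral_pow_population_succ hξ hind hφ, ih, Function.iterate_succ_apply]

lemma measure_population_eq_zero [IsProbabilityMeasure μ] (hξ : ∀ r, AEMeasurable (ξ r) μ)
    (hind : iIndepFun ξ μ) {φ : ℝ≥0∞ → ℝ≥0∞} (hφ : ∀ r s, ∫⁻ ω, s ^ ξ r ω ∂μ = φ s) (n : ℕ) :
    μ {ω | population ξ n ω = 0} = φ^[n] 0 := by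
  let ξ' r := (hξ r).mk (ξ r)
  have hξ' : ∀ r, ξ r =ᵐ[μ] ξ' r := fun r => (hξ r).ae_eq_mk
  have hφ' : ∀ r s, ∫⁻ ω, s ^ ξ' r ω ∂μ = φ s := fun r s => by
    rw [← hφ r s]
    exact lintegral_congr_ae ((hξ' r).fun_comp _).symm
  have hmeas' : ∀ r, Measurable (ξ' r) := fun r => (hξ r).measurable_mk
  calc μ {ω | population ξ n ω = 0} = μ (population ξ' n ⁻¹' {0}) :=
        measure_congr <| Filter.eventuallyEq_set.2 <|
          (population_congr_ae hξ' n).mono fun ω hω => by simp [hω]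
    _ = ∫⁻ ω, 0 ^ population ξ' n ω ∂μ := by
        rw [← lintegral_indicator_one (measurable_population hmeas' n (measurableSet_singleton 0))]
        congr with ω
        by_cases hω : population ξ' n ω = 0 <;> simp [hω]
    _ = φ^[n] 0 := lintegral_pow_population hmeas' (hind.congr hξ') hφ' n 0

end GaltonWatson

lemma lintegral_pow_binomial (q : ℝ≥0) (hq : q ≤ 1) (m : ℕ) (s : ℝ≥0∞) :
    ∫⁻ k, s ^ k ∂((PMF.binomial q hq m).map Fin.val).toMeasure = (q * s + (1 - q)) ^ m := by
  rw [← PMF.toMeasure_map _ _ (measurable_of_countable _), lintegral_map (measurable_of_countable _)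
    (measurable_of_countable _), lintegral_fintype, add_pow, ← Fin.sum_univ_eq_sum_range]
  refine Finset.sum_congr rfl fun i _ => ?_
  rw [PMF.toMeasure_apply_singleton _ _ (measurableSet_singleton i), PMF.binomial_apply,
    Fin.val_last, mul_pow]
  ring

lemma binomial_pgf_le_one_div_two_sub {p s : ℝ} {m : ℕ} (hp0 : 0 ≤ p) (hp1 : p ≤ 1)
    (hmean : 1 ≤ m * p) (hs0 : 0 ≤ s) (hs1 : s ≤ 1) :
    (p * s + (1 - p)) ^ m ≤ 1 / (2 - s) :=
  calc (p * s + (1 - p)) ^ m = (1 - p * (1 - s)) ^ m := by ring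
    _ ≤ 1 / (1 + m * (p * (1 - s))) :=
      pow_one_sub_le_one_div_one_add_mul (by nlinarith) (by nlinarith) m
    _ ≤ 1 / (2 - s) := by
      gcongr
      · linarith
      · nlinarith

lemma ofReal_binomial_pgf {p x : ℝ} (hp0 : 0 ≤ p) (hp1 : p ≤ 1) (hx : 0 ≤ x) (m : ℕ) :
    (ENNReal.ofReal p * ENNReal.ofReal x + (1 - ENNReal.ofReal p)) ^ m =
      ENNReal.ofReal ((p * x + (1 - p)) ^ m) := by
  rw [← ENNReal.ofReal_one, ← ENNReal.ofReal_sub _ hp0, ← ENNReal.ofReal_mul hp0,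
    ← ENNReal.ofReal_add (by positivity) (by linarith), ← ENNReal.ofReal_pow (by nlinarith)]

lemma iterate_binomial_pgf_zero_le {p : ℝ} {m : ℕ} (hp0 : 0 ≤ p) (hp1 : p ≤ 1)
    (hmean : 1 ≤ m * p) (n : ℕ) :
    (fun s => (ENNReal.ofReal p * s + (1 - ENNReal.ofReal p)) ^ m)^[n] 0 ≤
      ENNReal.ofReal (n / (n + 1)) := by
  induction n with
  | zero => simp
  | succ n ih =>
    have hn : (0 : ℝ) ≤ n / (n + 1) := by positivity
    calc _ ≤ (ENNReal.ofReal p * ENNReal.ofReal (n / (n + 1)) + (1 - ENNReal.ofReal p)) ^ m := by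
          rw [Function.iterate_succ_apply']
          gcongr
      _ = ENNReal.ofReal ((p * (n / (n + 1)) + (1 - p)) ^ m) := ofReal_binomial_pgf hp0 hp1 hn m
      _ ≤ ENNReal.ofReal (1 / (2 - n / (n + 1))) := by
          gcongr
          exact binomial_pgf_le_one_div_two_sub hp0 hp1 hmean hn
            ((div_le_one (by positivity)).2 (by linarith))
      _ = ENNReal.ofReal ((n + 1 : ℕ) / ((n + 1 : ℕ) + 1)) := by
          have : (2 : ℝ) - n / (n + 1) = (n + 2) / (n + 1) := by field_simp; ring
          rw [this, one_div_div]
          push_cast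
          ring_nf

theorem stmt4_general {Ω : Type*} [MeasurableSpace Ω] (μ : Measure Ω) [IsProbabilityMeasure μ]
    (m : ℕ) (p : ℝ) (hp0 : 0 ≤ p) (hple : ENNReal.ofReal p ≤ 1)
    (hmean : 1 ≤ (m : ℝ) * p)
    (ξ : ℕ × ℕ → Ω → ℕ)
    (hind : iIndepFun ξ μ)
    (hdist : ∀ q, Measure.map (ξ q) μ =
      ((PMF.binomial (Real.toNNReal p) (ENNReal.coe_le_one_iff.mp hple) m).map Fin.val).toMeasure)
    (Z : ℕ → Ω → ℕ) (hZ0 : ∀ ω, Z 0 ω = 1)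
    (hZrec : ∀ n ω, Z (n + 1) ω = ∑ j ∈ Finset.range (Z n ω), ξ (n, j) ω)
    (k : ℕ) :
    1 / ((k : ℝ) + 1) ≤ (μ {ω | 0 < Z k ω}).toReal := by
  have hp1 : p ≤ 1 := ENNReal.ofReal_le_one.mp hple
  have hξ : ∀ r, AEMeasurable (ξ r) μ := fun r =>
    aemeasurable_of_map_neZero (by rw [hdist r]; infer_instance)
  have hφ : ∀ r s, ∫⁻ ω, s ^ ξ r ω ∂μ = (ENNReal.ofReal p * s + (1 - ENNReal.ofReal p)) ^ m :=
    fun r s => by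
      rw [← lintegral_map' measurable_from_top.aemeasurable (hξ r), hdist r, lintegral_pow_binomial]
      rfl
  have hextinct : μ.real {ω | Z k ω = 0} ≤ k / (k + 1) := by
    rw [GaltonWatson.eq_population hZ0 hZrec]
    exact ENNReal.toReal_le_of_le_ofReal (by positivity)
      ((GaltonWatson.measure_population_eq_zero hξ hind hφ k).trans_le
        (iterate_binomial_pgf_zero_le hp0 hp1 hmean k))
  have hcover : 1 ≤ μ.real {ω | 0 < Z k ω} + μ.real {ω | Z k ω = 0} := by
    calc 1 = μ.real ({ω | 0 < Z k ω} ∪ {ω | Z k ω = 0}) := by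
          rw [← probReal_univ (μ := μ)]
          congr
          ext ω
          simp [Nat.pos_iff_ne_zero, em']
      _ ≤ _ := measureReal_union_le _ _
  have hk : 1 / ((k : ℝ) + 1) = 1 - k / (k + 1) := by field_simp; ring
  rw [hk]
  change _ ≤ μ.real _
  linarith

/-- Agresti's bound: a Galton–Watson branching process with Binomial(m, p) offspring
distribution of mean mp ≥ 1 survives to generation k with probability at least 1/(k+1). -/
theorem stmt4 {Ω : Type*} [MeasurableSpace Ω] (μ : Measure Ω) [IsProbabilityMeasure μ]
    (m : ℕ) (p : ℝ) (hp0 : 0 ≤ p) (hple : ENNReal.ofReal p ≤ 1)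
    (hmean : 1 ≤ (m : ℝ) * p)
    (ξ : ℕ × ℕ → Ω → ℕ)
    (hind : iIndepFun ξ μ)
    (hdist : ∀ q, Measure.map (ξ q) μ =
      ((PMF.binomial (Real.toNNReal p) (ENNReal.coe_le_one_iff.mp hple) m).map Fin.val).toMeasure)
    (Z : ℕ → Ω → ℕ) (hZ0 : ∀ ω, Z 0 ω = 1)
    (hZrec : ∀ n ω, Z (n + 1) ω = ∑ j ∈ Finset.range (Z n ω), ξ (n, j) ω)
    (k : ℕ) (hk : 0 < k) :
    1 / ((k : ℝ) + 1) ≤ (μ {ω | 0 < Z k ω}).toReal :=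
  stmt4_general μ m p hp0 hple hmean ξ hind hdist Z hZ0 hZrec k
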